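/- Let k be a field of characteristic p ≠ 2, n ≥ 4, V a 2n-dimensional k-vector space with basis v_1,...,v_{2n}, and l an integer with (n+1)/2 < l ≤ n. Let e = E_{2l-n-1,2n} + E_{n,2l-1} + Σ_{i=1}^{n-1} (E_{i,i+1} + E_{n+i+1,n+i}). Then e is nilpotent with exactly two Jordan blocks on V, of sizes 2l - 1 and 2n - 2l + 1. -/

import Mathlib

/-!
In 1-based indices, `e` moves `v_{i+1} ↦ v_i` and `v_{n+i} ↦ v_{n+i+1}` (`1 ≤ i < n`), and in
addition `v_{2l-1} ↦ v_n` and `v_{2n} ↦ v_{2l-n-1}`. Starting from `v_{n+1}`, the iterates of `e`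
run through `v_{n+1}, …, v_{2l-1}`, then through `v_{n+1+i} + v_{2l-1-i}`, and after the wrap at
`v_{2n}` through `2 v_{2l-n-1}, …, 2 v_1`: a Jordan chain of length `2l - 1`. Starting from
`v_{2l} - v_n`, the iterates `v_{2l+i} - v_{n-i}` form a chain of length `2n - 2l + 1`. Since `2`
is invertible, the two chains together span `V`, hence form a basis; and for a basis of Jordan
chains, the rank of `e ^ m` is the number of chain vectors of height at least `m`.
-/

open Matrix Module Submodule

section JordanChains

variable {K V σ : Type*} [DivisionRing K] [AddCommGroup V] [Module K V] [Fintype σ]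

def jordanChains (f : Module.End K V) (w : σ → V) (d : σ → ℕ) : (Σ s, Fin (d s)) → V :=
  fun x => (f ^ (x.2 : ℕ)) (w x.1)

theorem finrank_range_pow_eq_sum_of_jordanChains {f : Module.End K V} {w : σ → V} {d : σ → ℕ}
    (hli : LinearIndependent K (jordanChains f w d))
    (hspan : ⊤ ≤ span K (Set.range (jordanChains f w d)))
    (hend : ∀ s, (f ^ d s) (w s) = 0) (m : ℕ) :
    finrank K (LinearMap.range (f ^ m)) = ∑ s, (d s - m) := by
  set c := jordanChains f w d
  let g : (Σ s, Fin (d s - m)) → Σ s, Fin (d s) := fun x => ⟨x.1, ⟨x.2 + m, by omega⟩⟩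
  have hg : Function.Injective g := by
    rintro ⟨s, i⟩ ⟨t, j⟩ h
    simp only [g, Sigma.mk.injEq] at h
    obtain ⟨rfl, h⟩ := h
    simp only [heq_iff_eq, Fin.ext_iff, Nat.add_right_cancel_iff] at h
    rw [Fin.ext h]
  have hpow (s : σ) (i j : ℕ) : (f ^ i) ((f ^ j) (w s)) = (f ^ (i + j)) (w s) := by
    rw [pow_add, Module.End.mul_apply]
  have hrange : LinearMap.range (f ^ m) = span K (Set.range (c ∘ g)) := by
    rw [LinearMap.range_eq_map, ← eq_top_iff.mpr hspan, map_span, ← Set.range_comp]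
    apply le_antisymm
    · refine span_le.mpr ?_
      rintro _ ⟨⟨s, i⟩, rfl⟩
      by_cases h : m + i < d s
      · refine subset_span ⟨⟨s, ⟨i, by omega⟩⟩, ?_⟩
        simp only [Function.comp, c, g, jordanChains, hpow, add_comm]
      · have hzero : (f ^ (m + i)) (w s) = 0 := by
          rw [show m + i = (m + i - d s) + d s by omega, ← hpow, hend, map_zero]
        simp only [Function.comp, c, jordanChains, hpow, hzero, SetLike.mem_coe, zero_mem]
    · refine span_le.mpr ?_
      rintro _ ⟨⟨s, i⟩, rfl⟩
      refine subset_span ⟨⟨s, ⟨i, by omega⟩⟩, ?_⟩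
      simp only [Function.comp, c, g, jordanChains, hpow, add_comm]
  rw [hrange, finrank_span_eq_card (hli.comp g hg), Fintype.card_sigma]
  simp only [Fintype.card_fin]

theorem pow_eq_zero_of_jordanChains [FiniteDimensional K V] {f : Module.End K V} {w : σ → V}
    {d : σ → ℕ} (hli : LinearIndependent K (jordanChains f w d))
    (hspan : ⊤ ≤ span K (Set.range (jordanChains f w d)))
    (hend : ∀ s, (f ^ d s) (w s) = 0) {m : ℕ} (hm : ∀ s, d s ≤ m) : f ^ m = 0 := by
  have h := finrank_range_pow_eq_sum_of_jordanChains hli hspan hend m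
  simp only [Nat.sub_eq_zero_of_le (hm _), Finset.sum_const_zero, finrank_eq_zero] at h
  exact LinearMap.range_eq_bot.mp h

end JordanChains

theorem Fin.sum_ite_val_eq {M : Type*} [AddCommMonoid M] {N : ℕ} (a : ℕ) (g : Fin N → M) :
    (∑ x : Fin N, if (x : ℕ) = a then g x else 0) = if h : a < N then g ⟨a, h⟩ else 0 := by
  split_ifs with h
  · rw [Fintype.sum_eq_single ⟨a, h⟩ fun x hx => if_neg fun hxa => hx (Fin.ext hxa), if_pos rfl]
  · exact Finset.sum_eq_zero fun x _ => if_neg fun hxa => h (by omega)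

section UnitVec

variable (R : Type*)

/-- Indexed by `ℕ` (and zero outside `Fin N`), so that index arithmetic stays in `ℕ`. -/
def unitVec [Zero R] [One R] (N j : ℕ) : Fin N → R := fun r => if (r : ℕ) = j then 1 else 0

variable {R}

theorem mulVec_unitVec [NonAssocSemiring R] {M N : ℕ} (A : Matrix (Fin M) (Fin N) R) (j : ℕ) :
    A *ᵥ unitVec R N j = fun r => if h : j < N then A r ⟨j, h⟩ else 0 := by
  ext r
  simp only [mulVec, dotProduct, unitVec, mul_ite, mul_one, mul_zero, Fin.sum_ite_val_eq]

end UnitVec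

section TwoBlocks

variable (k : Type*) [CommRing k]

/-- The matrix `e` of the statement, entrywise and with 0-based indices. -/
def twoBlockMatrix (n l : ℕ) : Matrix (Fin (2*n)) (Fin (2*n)) k :=
  of fun r c => (if (c : ℕ) = r + 1 ∧ (r : ℕ) + 1 < n then 1 else 0) +
    (if (r : ℕ) = c + 1 ∧ n ≤ (c : ℕ) then 1 else 0) +
    (if (r : ℕ) = n - 1 ∧ (c : ℕ) = 2*l - 2 then 1 else 0) +
    (if (r : ℕ) = 2*l - n - 2 ∧ (c : ℕ) = 2*n - 1 then 1 else 0)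

variable {k} {n l : ℕ}

local notation "f" => Matrix.toLin' (twoBlockMatrix k n l)
local notation "b" => unitVec k (2*n)

theorem toLin'_twoBlockMatrix_unitVec_succ (hl1 : n + 1 < 2*l) {j : ℕ} (hj : j + 1 < n) :
    f (b (j + 1)) = b j := by
  ext r
  simp only [toLin'_apply, mulVec_unitVec, twoBlockMatrix, of_apply, unitVec]
  grind

theorem toLin'_twoBlockMatrix_unitVec_zero (hl1 : n + 1 < 2*l) :
    f (b 0) = 0 := by
  ext r
  simp only [toLin'_apply, mulVec_unitVec, twoBlockMatrix, of_apply, Pi.zero_apply]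
  grind

theorem toLin'_twoBlockMatrix_unitVec_of_le {j : ℕ} (hnj : n ≤ j) (hj : j + 1 < 2*n)
    (hjl : j ≠ 2*l - 2) : f (b j) = b (j + 1) := by
  ext r
  simp only [toLin'_apply, mulVec_unitVec, twoBlockMatrix, of_apply, unitVec]
  grind

theorem toLin'_twoBlockMatrix_unitVec_branch (hl1 : n + 1 < 2*l) (hl2 : l ≤ n) :
    f (b (2*l - 2)) = b (2*l - 1) + b (n - 1) := by
  ext r
  simp only [toLin'_apply, mulVec_unitVec, twoBlockMatrix, of_apply, unitVec, Pi.add_apply]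
  grind

theorem toLin'_twoBlockMatrix_unitVec_wrap :
    f (b (2*n - 1)) = b (2*l - n - 2) := by
  ext r
  simp only [toLin'_apply, mulVec_unitVec, twoBlockMatrix, of_apply, unitVec]
  grind

theorem toLin'_twoBlockMatrix_pow_unitVec_before_branch (hl2 : l ≤ n) {i : ℕ}
    (hi : n + i ≤ 2*l - 2) :
    (f ^ i) (b n) = b (n + i) := by
  induction i with
  | zero => rfl
  | succ i ih =>
    rw [pow_succ', Module.End.mul_apply, ih (by omega),
      toLin'_twoBlockMatrix_unitVec_of_le (by omega) (by omega) (by omega), add_assoc]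

theorem toLin'_twoBlockMatrix_pow_unitVec_after_branch (hl1 : n + 1 < 2*l) (hl2 : l ≤ n) {i : ℕ}
    (hi1 : 2*l - 1 ≤ n + i) (hi2 : i < n) :
    (f ^ i) (b n) = b (n + i) + b (2*l - 2 - i) := by
  induction i, (show 2*l - 1 - n ≤ i by omega) using Nat.le_induction with
  | base =>
    rw [show 2*l - 1 - n = (2*l - 2 - n) + 1 by omega, pow_succ', Module.End.mul_apply,
      toLin'_twoBlockMatrix_pow_unitVec_before_branch hl2 (by omega),
      show n + (2*l - 2 - n) = 2*l - 2 by omega,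
      toLin'_twoBlockMatrix_unitVec_branch hl1 hl2, show n + (2*l - 2 - n + 1) = 2*l - 1 by omega,
      show 2*l - 2 - (2*l - 2 - n + 1) = n - 1 by omega]
  | succ i hi ih =>
    rw [pow_succ', Module.End.mul_apply, ih (by omega) (by omega), map_add,
      toLin'_twoBlockMatrix_unitVec_of_le (by omega) (by omega) (by omega),
      show 2*l - 2 - i = (2*l - 2 - (i + 1)) + 1 by omega,
      toLin'_twoBlockMatrix_unitVec_succ hl1 (by omega), add_assoc]

theorem toLin'_twoBlockMatrix_pow_unitVec_after_wrap (hl1 : n + 1 < 2*l) (hl2 : l ≤ n) {i : ℕ}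
    (hi1 : n ≤ i) (hi2 : i ≤ 2*l - 2) :
    (f ^ i) (b n) = (2 : k) • b (2*l - 2 - i) := by
  induction i, hi1 using Nat.le_induction with
  | base =>
    rw [show f ^ n = f * f ^ (n - 1) by rw [← pow_succ', Nat.sub_add_cancel (by omega)],
      Module.End.mul_apply,
      toLin'_twoBlockMatrix_pow_unitVec_after_branch hl1 hl2 (by omega) (by omega), map_add,
      show n + (n - 1) = 2*n - 1 by omega, toLin'_twoBlockMatrix_unitVec_wrap,
      show 2*l - 2 - (n - 1) = (2*l - n - 2) + 1 by omega,
      toLin'_twoBlockMatrix_unitVec_succ hl1 (by omega), two_smul,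
      show 2*l - 2 - n = 2*l - n - 2 by omega]
  | succ i hi ih =>
    rw [pow_succ', Module.End.mul_apply, ih (by omega), map_smul,
      show 2*l - 2 - i = (2*l - 2 - (i + 1)) + 1 by omega,
      toLin'_twoBlockMatrix_unitVec_succ hl1 (by omega)]

theorem toLin'_twoBlockMatrix_pow_unitVec_eq_zero (hl1 : n + 1 < 2*l) (hl2 : l ≤ n) :
    (f ^ (2*l - 1)) (b n) = 0 := by
  rw [show 2*l - 1 = (2*l - 2) + 1 by omega, pow_succ', Module.End.mul_apply,
    toLin'_twoBlockMatrix_pow_unitVec_after_wrap hl1 hl2 (by omega) le_rfl, map_smul, Nat.sub_self,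
    toLin'_twoBlockMatrix_unitVec_zero hl1, smul_zero]

theorem toLin'_twoBlockMatrix_pow_unitVec_sub (hl1 : n + 1 < 2*l) {i : ℕ} (hi : 2*l - 1 + i < 2*n) :
    (f ^ i) (b (2*l - 1) - b (n - 1)) = b (2*l - 1 + i) - b (n - 1 - i) := by
  induction i with
  | zero => rfl
  | succ i ih =>
    rw [pow_succ', Module.End.mul_apply, ih (by omega), map_sub,
      toLin'_twoBlockMatrix_unitVec_of_le (by omega) (by omega) (by omega),
      show n - 1 - i = (n - 1 - (i + 1)) + 1 by omega,
      toLin'_twoBlockMatrix_unitVec_succ hl1 (by omega), add_assoc]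

theorem toLin'_twoBlockMatrix_pow_unitVec_sub_eq_zero (hl1 : n + 1 < 2*l) (hl2 : l ≤ n) :
    (f ^ (2*n - 2*l + 1)) (b (2*l - 1) - b (n - 1)) = 0 := by
  rw [pow_succ', Module.End.mul_apply, toLin'_twoBlockMatrix_pow_unitVec_sub hl1 (by omega),
    map_sub,
    show 2*l - 1 + (2*n - 2*l) = 2*n - 1 by omega, toLin'_twoBlockMatrix_unitVec_wrap,
    show n - 1 - (2*n - 2*l) = (2*l - n - 2) + 1 by omega,
    toLin'_twoBlockMatrix_unitVec_succ hl1 (by omega), sub_self]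

end TwoBlocks

section TwoBlocksField

variable {k : Type*} [Field k] {n l : ℕ}

local notation "f" => Matrix.toLin' (twoBlockMatrix k n l)
local notation "b" => unitVec k (2*n)
local notation "starts" => ![b n, b (2*l - 1) - b (n - 1)]
local notation "lengths" => ![2*l - 1, 2*n - 2*l + 1]

theorem top_le_span_jordanChains_twoBlockMatrix (h2 : (2 : k) ≠ 0) (hl1 : n + 1 < 2*l)
    (hl2 : l ≤ n) :
    ⊤ ≤ span k (Set.range (jordanChains f starts lengths)) := by
  set S := span k (Set.range (jordanChains f starts lengths))
  have long (i : ℕ) (hi : i < 2*l - 1) : (f ^ i) (b n) ∈ S := subset_span ⟨⟨0, ⟨i, hi⟩⟩, rfl⟩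
  have short (i : ℕ) (hi : i < 2*n - 2*l + 1) : (f ^ i) (b (2*l - 1) - b (n - 1)) ∈ S :=
    subset_span ⟨⟨1, ⟨i, hi⟩⟩, rfl⟩
  have two_smul_mem (j : ℕ) (hj : j < 2*n) : (2 : k) • b j ∈ S := by
    by_cases hj1 : j < 2*l - n - 1
    · have h := toLin'_twoBlockMatrix_pow_unitVec_after_wrap (k := k) hl1 hl2 (i := 2*l - 2 - j)
        (by omega) (by omega)
      rw [show 2*l - 2 - (2*l - 2 - j) = j by omega] at h
      exact h ▸ long _ (by omega)
    by_cases hj2 : j < n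
    · convert S.sub_mem (long (2*l - 2 - j) (by omega)) (short (n - 1 - j) (by omega)) using 1
      rw [toLin'_twoBlockMatrix_pow_unitVec_after_branch hl1 hl2 (by omega) (by omega),
        toLin'_twoBlockMatrix_pow_unitVec_sub hl1 (by omega),
        show 2*l - 2 - (2*l - 2 - j) = j by omega,
        show 2*l - 1 + (n - 1 - j) = n + (2*l - 2 - j) by omega,
        show n - 1 - (n - 1 - j) = j by omega]
      module
    by_cases hj3 : j < 2*l - 1
    · have h := toLin'_twoBlockMatrix_pow_unitVec_before_branch (k := k) hl2 (i := j - n) (by omega)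
      rw [show n + (j - n) = j by omega] at h
      exact S.smul_mem _ (h ▸ long _ (by omega))
    · convert S.add_mem (long (j - n) (by omega)) (short (j - (2*l - 1)) (by omega)) using 1
      rw [toLin'_twoBlockMatrix_pow_unitVec_after_branch hl1 hl2 (by omega) (by omega),
        toLin'_twoBlockMatrix_pow_unitVec_sub hl1 (by omega), show n + (j - n) = j by omega,
        show 2*l - 1 + (j - (2*l - 1)) = j by omega,
        show n - 1 - (j - (2*l - 1)) = 2*l - 2 - (j - n) by omega]
      module
  rw [← (Pi.basisFun k (Fin (2*n))).span_eq, span_le]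
  rintro _ ⟨r, rfl⟩
  have hr : Pi.basisFun k (Fin (2*n)) r = b r := by
    ext
    simp [unitVec, Pi.single_apply, Fin.ext_iff]
  rw [hr]
  exact (S.smul_mem_iff h2).mp (two_smul_mem r r.2)

theorem twoBlockMatrix_isNilpotent_and_rank_pow (h2 : (2 : k) ≠ 0) (hl1 : n + 1 < 2*l)
    (hl2 : l ≤ n) :
    IsNilpotent (twoBlockMatrix k n l) ∧
      ∀ m : ℕ, (twoBlockMatrix k n l ^ m).rank = (2*l - 1 - m) + (2*n - 2*l + 1 - m) := by
  have hspan := top_le_span_jordanChains_twoBlockMatrix h2 hl1 hl2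
  have hli := linearIndependent_of_top_le_span_of_card_eq_finrank hspan (by
    simp only [Fintype.card_sigma, Fin.sum_univ_two, Fintype.card_fin, finrank_fin_fun,
      Matrix.cons_val_zero, Matrix.cons_val_one]
    omega)
  have hend : ∀ s, (f ^ lengths s) (starts s) = 0 :=
    Fin.forall_fin_two.mpr ⟨toLin'_twoBlockMatrix_pow_unitVec_eq_zero hl1 hl2,
      toLin'_twoBlockMatrix_pow_unitVec_sub_eq_zero hl1 hl2⟩
  refine ⟨⟨2*l - 1, toLin'.injective ?_⟩, fun m => ?_⟩
  · rw [toLin'_pow, map_zero]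
    exact pow_eq_zero_of_jordanChains hli hspan hend
      (Fin.forall_fin_two.mpr ⟨le_rfl, show 2*n - 2*l + 1 ≤ 2*l - 1 by omega⟩)
  · rw [Matrix.rank, ← toLin'_apply', toLin'_pow,
      finrank_range_pow_eq_sum_of_jordanChains hli hspan hend, Fin.sum_univ_two]
    rfl

end TwoBlocksField

theorem stmt_6 (k : Type*) [Field k] (p : ℕ) [CharP k p] (hp : p ≠ 2)
    (n l : ℕ) (hl1 : n + 1 < 2*l) (hl2 : l ≤ n) :
    let e : Matrix (Fin (2*n)) (Fin (2*n)) k :=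
      single ⟨2*l-n-2, by omega⟩ ⟨2*n-1, by omega⟩ 1 +
      single ⟨n-1, by omega⟩ ⟨2*l-2, by omega⟩ 1 +
      ∑ i : Fin (n-1),
        (single ⟨i.1, by have := i.2; omega⟩ ⟨i.1+1, by have := i.2; omega⟩ 1 +
         single ⟨n+i.1+1, by have := i.2; omega⟩ ⟨n+i.1, by have := i.2; omega⟩ 1)
    IsNilpotent e ∧
    ∀ m : ℕ, (e ^ m).rank = (2*l - 1 - m) + (2*n - 2*l + 1 - m) := by
  intro e
  have he : e = twoBlockMatrix k n l := by
    ext r c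
    -- conditions of the form `x = a ∧ _` let `Fin.sum_ite_val_eq` collapse the two sums
    have hsup (x : ℕ) : (x = r ∧ x + 1 = c) ↔ (x = r ∧ (c : ℕ) = r + 1) := by omega
    have hsub (x : ℕ) :
        (n + x + 1 = r ∧ n + x = c) ↔ (x = c - n ∧ ((r : ℕ) = c + 1 ∧ n ≤ (c : ℕ))) := by
      omega
    simp only [e, twoBlockMatrix, Matrix.add_apply, Matrix.sum_apply, single_apply, Fin.ext_iff,
      hsup, hsub, ite_and, dite_eq_ite, Finset.sum_add_distrib, Fin.sum_ite_val_eq, of_apply]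
    grind
  have h2 : (2 : k) ≠ 0 := Ring.two_ne_zero (by rw [ringChar.eq k p]; exact hp)
  rw [he]
  exact twoBlockMatrix_isNilpotent_and_rank_pow h2 hl1 hl2
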